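/- arXiv:0902.3220 — 3 statements merged into one kernel-verified Lean document; each statement's English description precedes it below -/
import Mathlib

section
/- Let Γ ≤ Aut(X*) be a weakly branch group generated by a finite set of finite-state automorphisms. Then Γ does not fix any ray w ∈ X^ω of the boundary of the tree. -/
open List

/-- Vertices of the regular rooted tree over alphabet `X`: finite words. -/
abbrev Vtx (X : Type*) := List X

section Tree

variable {X : Type*} [DecidableEq X]

/-- A permutation of the vertex set is a rooted-tree automorphism if it fixes the
root and maps children of a vertex to children of its image. -/
def IsTreeAut (f : Equiv.Perm (Vtx X)) : Prop :=
  f [] = [] ∧ ∀ (w : Vtx X) (x : X), ∃ y : X, f (w ++ [x]) = f w ++ [y]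

/-- The state (section) of `f` at the vertex `w`, as a function on vertices. -/
def stateFun (f : Equiv.Perm (Vtx X)) (w : Vtx X) : Vtx X → Vtx X :=
  fun t => (f (w ++ t)).drop w.length

/-- The rigid stabilizer of the vertex `v` in the full automorphism group:
all permutations moving only (proper or improper) descendants of `v`. -/
def rist (v : Vtx X) : Subgroup (Equiv.Perm (Vtx X)) where
  carrier := {g | ∀ w : Vtx X, ¬ v <+: w → g w = w}
  one_mem' := by intro w _; rfl
  mul_mem' := by
    intro a b ha hb w hw
    have : (a * b) w = a (b w) := rfl
    rw [this, hb w hw, ha w hw]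
  inv_mem' := by
    intro a ha w hw
    have h := ha w hw
    conv_lhs => rw [← h]
    exact Equiv.symm_apply_apply a w

/-- The rigid stabilizer of `v` in `G`. -/
def ristG (G : Subgroup (Equiv.Perm (Vtx X))) (v : Vtx X) :
    Subgroup (Equiv.Perm (Vtx X)) :=
  rist v ⊓ G

/-- The `n`-th level rigid stabilizer of `G`: the subgroup generated by the
rigid stabilizers of all vertices of level `n`. -/
def ristLevel (G : Subgroup (Equiv.Perm (Vtx X))) (n : ℕ) :
    Subgroup (Equiv.Perm (Vtx X)) :=
  ⨆ v ∈ {v : Vtx X | v.length = n}, ristG G v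

/-- The `n`-th level stabilizer of `G`: elements fixing all vertices of level `≤ n`. -/
def stabLevel (G : Subgroup (Equiv.Perm (Vtx X))) (n : ℕ) :
    Subgroup (Equiv.Perm (Vtx X)) :=
  G ⊓ { carrier := {g | ∀ w : Vtx X, w.length ≤ n → g w = w}
        one_mem' := by intro w _; rfl
        mul_mem' := by
          intro a b ha hb w hw
          have : (a * b) w = a (b w) := rfl
          rw [this, hb w hw, ha w hw]
        inv_mem' := by
          intro a ha w hw
          have h := ha w hw
          conv_lhs => rw [← h]
          exact Equiv.symm_apply_apply a w }

/-- Underlying function of the vtr `v*g`. -/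
def vtrFun (v : Vtx X) (g : Vtx X → Vtx X) : Vtx X → Vtx X :=
  fun w => if v <+: w then v ++ g (w.drop v.length) else w

lemma vtr_aux (v : Vtx X) (g h : Vtx X → Vtx X)
    (hgh : ∀ t, h (g t) = t) (w : Vtx X) :
    vtrFun v h (vtrFun v g w) = w := by
  by_cases hp : v <+: w
  · obtain ⟨t, rfl⟩ := hp
    simp [vtrFun, List.drop_left, hgh, List.prefix_append]
  · simp [vtrFun, hp]

/-- The vtr `v*g`: the automorphism acting as `g` on the subtree rooted
at `v` and trivially elsewhere. -/
def vtr (v : Vtx X) (g : Equiv.Perm (Vtx X)) : Equiv.Perm (Vtx X) where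
  toFun := vtrFun v g
  invFun := vtrFun v g.symm
  left_inv := vtr_aux v g g.symm fun t => g.symm_apply_apply t
  right_inv := vtr_aux v g.symm g fun t => g.apply_symm_apply t

lemma vtr_apply (v : Vtx X) (g : Equiv.Perm (Vtx X)) (w : Vtx X) :
    vtr v g w = if v <+: w then v ++ g (w.drop v.length) else w := rfl

/-- `g ↦ v*g` as a group homomorphism. -/
def vtrHom (v : Vtx X) : Equiv.Perm (Vtx X) →* Equiv.Perm (Vtx X) where
  toFun := vtr v
  map_one' := by
    ext w
    by_cases hp : v <+: w
    · obtain ⟨t, rfl⟩ := hp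
      simp [vtr, vtrFun, List.drop_left, List.prefix_append]
    · simp [vtr, vtrFun, hp]
  map_mul' := by
    intro a b
    ext w
    have hmul : (vtr v a * vtr v b) w = vtr v a (vtr v b w) := rfl
    rw [hmul]
    by_cases hp : v <+: w
    · obtain ⟨t, rfl⟩ := hp
      simp [vtr, vtrFun, List.drop_left, List.prefix_append]
    · simp [vtr, vtrFun, hp]

/-- `K` is a branching subgroup of `G`: `K ≤ G` and `v*K ≤ K` for all vertices. -/
def IsBranching (G K : Subgroup (Equiv.Perm (Vtx X))) : Prop :=
  K ≤ G ∧ ∀ v : Vtx X, ∀ g ∈ K, vtr v g ∈ K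

/-- The product `X^n * K` of the translates `v*K` over all vertices of level `n`. -/
def levelProd (K : Subgroup (Equiv.Perm (Vtx X))) (n : ℕ) :
    Subgroup (Equiv.Perm (Vtx X)) :=
  Subgroup.closure {p | ∃ v : Vtx X, v.length = n ∧ ∃ g ∈ K, p = vtr v g}

/-- The group `G⋉v` of states at `v` of the rigid stabilizer:
those `g ∈ G` with `v*g ∈ G`. -/
def pristSub (G : Subgroup (Equiv.Perm (Vtx X))) (v : Vtx X) :
    Subgroup (Equiv.Perm (Vtx X)) :=
  G ⊓ G.comap (vtrHom v)

/-- `G_#`, the intersection of all `G⋉v` (the maximal branching subgroup when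
`G` is regular branch). -/
def Gsharp (G : Subgroup (Equiv.Perm (Vtx X))) : Subgroup (Equiv.Perm (Vtx X)) :=
  ⨅ v : Vtx X, pristSub G v

/-- `G` is self-similar: all states of elements of `G` are (induced by) elements of `G`. -/
def SelfSimilar (G : Subgroup (Equiv.Perm (Vtx X))) : Prop :=
  ∀ g ∈ G, ∀ w : Vtx X, ∃ h ∈ G, ∀ t : Vtx X, h t = stateFun g w t

/-- `G` is level-transitive: transitive on each level of the tree. -/
def LevelTransitive (G : Subgroup (Equiv.Perm (Vtx X))) : Prop :=
  ∀ v w : Vtx X, v.length = w.length → ∃ g ∈ G, g v = w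

/-- `G` is recurrent: the state at `v` of the stabilizer of `v` is all of `G`. -/
def Recurrent (G : Subgroup (Equiv.Perm (Vtx X))) : Prop :=
  ∀ v : Vtx X, ∀ h : Equiv.Perm (Vtx X),
    (h ∈ G ↔ ∃ g ∈ G, g v = v ∧ ∀ t : Vtx X, h t = stateFun g v t)

/-- `G` is a regular branch group (for this action): it has a non-trivial
branching subgroup `K` with all products `X^n*K` of finite index in `G`. -/
def RegularBranch (G : Subgroup (Equiv.Perm (Vtx X))) : Prop :=
  ∃ K : Subgroup (Equiv.Perm (Vtx X)), IsBranching G K ∧ K ≠ ⊥ ∧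
    ∀ n : ℕ, ((levelProd K n).subgroupOf G).FiniteIndex

/-- The subgroup generated by `e`-th powers of elements of `H`. -/
def powSubgroup {P : Type*} [Group P] (H : Subgroup P) (e : ℕ) : Subgroup P :=
  Subgroup.closure {x | ∃ h ∈ H, x = h ^ e}

/-- The normal closure of `g` in the subgroup `Γ`. -/
def nclosure {P : Type*} [Group P] (Γ : Subgroup P) (g : P) : Subgroup P :=
  Subgroup.closure {x | ∃ h ∈ Γ, x = h * g * h⁻¹}

/-- `g` is finite-state: it has only finitely many states. -/
def FiniteState (g : Equiv.Perm (Vtx X)) : Prop :=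
  {f : Vtx X → Vtx X | ∃ w : Vtx X, f = stateFun g w}.Finite

/-- `g` fixes the boundary ray `y`, i.e. it fixes each of its finite prefixes. -/
def fixesRay (g : Equiv.Perm (Vtx X)) (y : ℕ → X) : Prop :=
  ∀ n : ℕ, g ((List.range n).map y) = (List.range n).map y

end Tree

/-- A group satisfies a (non-trivial) group law. -/
def SatisfiesLaw (G : Type*) [Group G] : Prop :=
  ∃ w : FreeGroup ℕ, w ≠ 1 ∧ ∀ φ : FreeGroup ℕ →* G, φ w = 1

/-!
Along a ray fixed by `Γ`, the tuple of states of the finitely many finite-state generators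
takes only finitely many values, so two prefixes `u` and `u ++ z` with `z ≠ []` carry the same
tuple (pumping). As the generators fix both vertices, every element of `Γ` has equal states at
`u` and at `u ++ z`. An element of the rigid stabilizer of `u ++ z` is then trivial: below
`u ++ z` it copies its action below `u`, and off that subtree it does nothing, so induction on
length shows it fixes everything. This contradicts weak branching.
-/

section FixedRay

variable {X : Type*}

namespace IsTreeAut

variable {f : Equiv.Perm (Vtx X)}

theorem length_apply (hf : IsTreeAut f) (w : Vtx X) : (f w).length = w.length := by
  induction w using List.reverseRecOn with
  | nil => simp [hf.1]
  | append_singleton w x ih =>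
    obtain ⟨y, hy⟩ := hf.2 w x
    simp [hy, ih]

theorem apply_append (hf : IsTreeAut f) (w t : Vtx X) :
    f (w ++ t) = f w ++ stateFun f w t := by
  obtain ⟨t', ht'⟩ : ∃ t', f (w ++ t) = f w ++ t' := by
    induction t using List.reverseRecOn with
    | nil => exact ⟨[], by simp⟩
    | append_singleton t x ih =>
      obtain ⟨t', ht'⟩ := ih
      obtain ⟨y, hy⟩ := hf.2 (w ++ t) x
      exact ⟨t' ++ [y], by rw [← List.append_assoc, hy, ht', List.append_assoc]⟩
  simp only [stateFun, ht', ← hf.length_apply w, List.drop_left]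

theorem exists_inv_apply_append (hf : IsTreeAut f) {u : Vtx X} (hu : f u = u) (t : Vtx X) :
    ∃ t', f⁻¹ (u ++ t) = u ++ t' := by
  set w := f⁻¹ (u ++ t)
  have hw : f w = u ++ t := f.apply_symm_apply _
  have hlen : u.length ≤ w.length := by simp [← hf.length_apply w, hw]
  have htake : f (w.take u.length) = u := by
    have h := hf.apply_append (w.take u.length) (w.drop u.length)
    rw [List.take_append_drop, hw] at h
    exact ((List.append_inj h (by simp [hf.length_apply, hlen])).1).symm
  refine ⟨w.drop u.length, ?_⟩
  conv_lhs => rw [← List.take_append_drop u.length w, f.injective (htake.trans hu.symm)]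

end IsTreeAut

/-- `g|_u = g|_v` for a `g` fixing `u` and `v`, phrased without `stateFun` so that it is
closed under composition of arbitrary permutations. -/
def EqualStatesAt (g : Equiv.Perm (Vtx X)) (u v : Vtx X) : Prop :=
  ∀ t, ∃ t', g (u ++ t) = u ++ t' ∧ g (v ++ t) = v ++ t'

theorem equalStatesAt_one (u v : Vtx X) : EqualStatesAt 1 u v :=
  fun t => ⟨t, rfl, rfl⟩

theorem EqualStatesAt.mul {g h : Equiv.Perm (Vtx X)} {u v : Vtx X}
    (hg : EqualStatesAt g u v) (hh : EqualStatesAt h u v) : EqualStatesAt (g * h) u v := by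
  intro t
  obtain ⟨t', hu, hv⟩ := hh t
  obtain ⟨t'', hu', hv'⟩ := hg t'
  exact ⟨t'', by rw [Equiv.Perm.mul_apply, hu, hu'], by rw [Equiv.Perm.mul_apply, hv, hv']⟩

def equalStatesSubgroup (u v : Vtx X) : Subgroup (Equiv.Perm (Vtx X)) where
  carrier := {g | EqualStatesAt g u v ∧ EqualStatesAt g⁻¹ u v}
  one_mem' := ⟨equalStatesAt_one u v, by rw [inv_one]; exact equalStatesAt_one u v⟩
  mul_mem' := fun ⟨hg, hg'⟩ ⟨hh, hh'⟩ => ⟨hg.mul hh, by rw [mul_inv_rev]; exact hh'.mul hg'⟩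
  inv_mem' := fun ⟨hg, hg'⟩ => ⟨hg', by rwa [inv_inv]⟩

namespace IsTreeAut

variable {f : Equiv.Perm (Vtx X)} {u v : Vtx X}

theorem equalStatesAt (hf : IsTreeAut f) (hu : f u = u) (hv : f v = v)
    (hs : stateFun f u = stateFun f v) : EqualStatesAt f u v :=
  fun t => ⟨stateFun f u t, by rw [hf.apply_append, hu], by rw [hf.apply_append, hv, hs]⟩

theorem equalStatesAt_inv (hf : IsTreeAut f) (hu : f u = u) (hv : f v = v)
    (hs : stateFun f u = stateFun f v) : EqualStatesAt f⁻¹ u v := by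
  intro t
  obtain ⟨t', ht'⟩ := hf.exists_inv_apply_append hu t
  obtain ⟨s, hus, hvs⟩ := hf.equalStatesAt hu hv hs t'
  have hst : s = t :=
    List.append_cancel_left (hus.symm.trans (Equiv.Perm.inv_eq_iff_eq.1 ht').symm)
  exact ⟨t', ht', Equiv.Perm.inv_eq_iff_eq.2 (by rw [hvs, hst])⟩

theorem mem_equalStatesSubgroup (hf : IsTreeAut f) (hu : f u = u) (hv : f v = v)
    (hs : stateFun f u = stateFun f v) : f ∈ equalStatesSubgroup u v :=
  ⟨hf.equalStatesAt hu hv hs, hf.equalStatesAt_inv hu hv hs⟩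

end IsTreeAut

section RigidStabilizer

variable {g : Equiv.Perm (Vtx X)} {u z : Vtx X}

theorem apply_append_eq_self_of_mem_rist (hg : g ∈ rist (u ++ z)) (hz : z ≠ [])
    (hgs : EqualStatesAt g u (u ++ z)) (t : Vtx X) : g (u ++ t) = u ++ t := by
  induction h : t.length using Nat.strong_induction_on generalizing t with
  | _ n ih =>
  by_cases hzt : z <+: t
  · obtain ⟨t', rfl⟩ := hzt
    obtain ⟨s, hus, huzs⟩ := hgs t'
    have hlt : t'.length < n := by simp [← h, List.length_pos_iff.2 hz]
    have hst : s = t' := List.append_cancel_left (hus.symm.trans (ih _ hlt t' rfl))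
    rw [← List.append_assoc, huzs, hst]
  · exact hg _ (by rwa [List.prefix_append_right_inj])

theorem eq_one_of_mem_rist_of_equalStatesAt (hg : g ∈ rist (u ++ z)) (hz : z ≠ [])
    (hgs : EqualStatesAt g u (u ++ z)) : g = 1 := by
  refine Equiv.ext fun w => ?_
  by_cases hw : u ++ z <+: w
  · obtain ⟨t, rfl⟩ := hw
    rw [List.append_assoc, apply_append_eq_self_of_mem_rist hg hz hgs]
    rfl
  · exact hg w hw

end RigidStabilizer

theorem exists_lt_forall_stateFun_eq {S : Set (Equiv.Perm (Vtx X))} (hS : S.Finite)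
    (hfs : ∀ s ∈ S, FiniteState s) (p : ℕ → Vtx X) :
    ∃ m n, m < n ∧ ∀ s ∈ S, stateFun s (p m) = stateFun s (p n) := by
  have : Finite S := hS.to_subtype
  obtain ⟨m, n, hmn, h⟩ := Set.Finite.exists_lt_map_eq_of_forall_mem
    (f := fun n (s : S) => stateFun s.1 (p n))
    (t := Set.univ.pi fun s : S => {f | ∃ w, f = stateFun s.1 w})
    (fun n s _ => ⟨p n, rfl⟩) (Set.Finite.pi fun s => hfs s s.2)
  exact ⟨m, n, hmn, fun s hs => congrFun h ⟨s, hs⟩⟩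

theorem map_range_prefix_map_range (y : ℕ → X) {m n : ℕ} (h : m ≤ n) :
    (range m).map y <+: (range n).map y := by
  simpa [← List.map_take, List.take_range, h] using List.take_prefix m ((range n).map y)

end FixedRay

theorem no_fixed_ray_general
    {X : Type*}
    (Γ : Subgroup (Equiv.Perm (Vtx X)))
    (S : Set (Equiv.Perm (Vtx X))) (hSfin : S.Finite)
    (hSst : ∀ s ∈ S, IsTreeAut s ∧ FiniteState s)
    (hgen : Γ = Subgroup.closure S)
    (hwb : ∀ v : Vtx X, ristG Γ v ≠ ⊥) :
    ¬ ∃ y : ℕ → X, ∀ g ∈ Γ, fixesRay g y := by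
  rintro ⟨y, hy⟩
  obtain ⟨m, n, hmn, hst⟩ := exists_lt_forall_stateFun_eq hSfin (fun s hs => (hSst s hs).2)
    fun k => (range k).map y
  obtain ⟨z, hz⟩ := map_range_prefix_map_range y hmn.le
  have hz0 : z ≠ [] := by
    rintro rfl
    simpa [hmn.ne] using congrArg length hz
  have hΓ : Γ ≤ equalStatesSubgroup ((range m).map y) ((range n).map y) := by
    rw [hgen, Subgroup.closure_le]
    intro s hs
    have hsΓ : s ∈ Γ := hgen ▸ Subgroup.subset_closure hs
    exact (hSst s hs).1.mem_equalStatesSubgroup (hy s hsΓ m) (hy s hsΓ n) (hst s hs)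
  obtain ⟨⟨g, hgr, hgΓ⟩, hg1⟩ := Subgroup.ne_bot_iff_exists_ne_one.1 (hwb ((range n).map y))
  rw [← hz] at hgr hΓ
  exact hg1 (Subtype.ext (eq_one_of_mem_rist_of_equalStatesAt hgr hz0 (hΓ hgΓ).1))

/-- a weakly branch group generated by finitely many finite-state
automorphisms fixes no boundary ray. -/
theorem no_fixed_ray
    {X : Type*} [DecidableEq X] [Fintype X]
    (Γ : Subgroup (Equiv.Perm (Vtx X)))
    (S : Set (Equiv.Perm (Vtx X))) (hSfin : S.Finite)
    (hSst : ∀ s ∈ S, IsTreeAut s ∧ FiniteState s)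
    (hgen : Γ = Subgroup.closure S)
    (hwb : ∀ v : Vtx X, ristG Γ v ≠ ⊥) :
    ¬ ∃ y : ℕ → X, ∀ g ∈ Γ, fixesRay g y :=
  no_fixed_ray_general Γ S hSfin hSst hgen hwb
end

section
/- Let Γ ≤ Aut(T) be a level-transitive branch group and N a non-trivial normal subgroup of Γ. If N satisfies a non-trivial group law, then Γ satisfies a non-trivial group law. -/
open List

/-!
A non-trivial normal subgroup `N` moves some vertex, so by level-transitivity it contains, for
every vertex `v` of that level `n`, an element `g` with `g v ≠ v`. For `a, b` in the rigid
stabilizer of `v`, the element `g b⁻¹ g⁻¹` lies in the rigid stabilizer of `g v ≠ v` and hence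
commutes with `a`, so `⁅a, b⁆ = ⁅a, ⁅b, g⁆⁆ ∈ N`; rigid stabilizers of distinct vertices of one
level commute. Hence `⁅R, R⁆ ≤ N` for `R = rist_Γ(n)`.

A law `w` of `⁅R, R⁆` yields the law `w(⁅x₀, x₁⁆, ⁅x₂, x₃⁆, …)` of `R`, and a law `w` of the
finite-index subgroup `R` yields the law `w(x₀ᵉ, x₁ᵉ, …)` of `Γ`, where `e` is the index of the
normal core of `R`. Both substitutions are injective on the free group, since they map reduced
words to reduced words: the images of two consecutive letters of a reduced word do not cancel.
-/

open scoped commutatorElement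

namespace FreeGroup

variable {α β : Type*} {σ : α → FreeGroup β}

theorem lift_mk_singleton_ne_one (hσ : ∀ a, σ a ≠ 1) (p : α × Bool) : lift σ (mk [p]) ≠ 1 := by
  rcases p with ⟨a, _ | _⟩ <;> simp [hσ a]

variable [DecidableEq β]

theorem toWord_lift_mk_of_isReduced (hσ : ∀ a, σ a ≠ 1)
    (hjoin : ∀ p q : α × Bool, IsReduced [p, q] →
      IsReduced ((lift σ (mk [p])).toWord ++ (lift σ (mk [q])).toWord))
    {L : List (α × Bool)} (hL : IsReduced L) :
    (lift σ (mk L)).toWord = L.flatMap fun p => (lift σ (mk [p])).toWord := by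
  induction L with
  | nil => simp [← one_eq_mk]
  | cons p L ih =>
    rcases L with _ | ⟨q, L⟩
    · simp
    have htail := ih (isReduced_cons_cons.mp hL).2
    have hreduced := isReduced_toWord (x := lift σ (mk (q :: L)))
    rw [htail, List.flatMap_cons] at hreduced
    rw [show mk (p :: q :: L) = mk [p] * mk (q :: L) from rfl, _root_.map_mul, toWord_mul, htail]
    simp only [List.flatMap_cons, ← List.append_assoc]
    refine IsReduced.reduce_eq ((hjoin p q ?_).append_overlap hreduced ?_)
    · simpa using (isReduced_cons_cons.mp hL).1
    · exact toWord_eq_nil_iff.not.mpr (lift_mk_singleton_ne_one hσ q)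

theorem lift_injective_of_isReduced_append (hσ : ∀ a, σ a ≠ 1)
    (hjoin : ∀ p q : α × Bool, IsReduced [p, q] →
      IsReduced ((lift σ (mk [p])).toWord ++ (lift σ (mk [q])).toWord)) :
    Function.Injective (lift σ) := by
  classical
  refine (injective_iff_map_eq_one _).mpr fun w hw => ?_
  have h := toWord_lift_mk_of_isReduced hσ hjoin (isReduced_toWord (x := w))
  rw [mk_toWord, hw, toWord_one, eq_comm, List.flatMap_eq_nil_iff] at h
  rw [← toWord_eq_nil_iff, List.eq_nil_iff_forall_not_mem]
  exact fun p hp => lift_mk_singleton_ne_one hσ p (toWord_eq_nil_iff.mp (h p hp))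

theorem lift_of_pow_injective {e : ℕ} (he : e ≠ 0) :
    Function.Injective (lift fun a : β => of a ^ e) := by
  have hword (p : β × Bool) : (lift (fun a => of a ^ e) (mk [p])).toWord = List.replicate e p := by
    rcases p with ⟨a, _ | _⟩ <;> simp [toWord_of_pow, invRev]
  refine lift_injective_of_isReduced_append (fun a => ?_) fun p q hpq => ?_
  · simpa [← toWord_eq_nil_iff, toWord_of_pow] using he
  · rw [hword, hword]
    refine List.isChain_append.mpr ⟨List.isChain_replicate_of_rel _ fun _ => rfl,
      List.isChain_replicate_of_rel _ fun _ => rfl, ?_⟩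
    simpa [List.getLast?_replicate, List.head?_replicate, he, IsReduced] using hpq

theorem toWord_commutatorElement_of {x y : β} (hxy : x ≠ y) :
    (⁅of x, of y⁆ : FreeGroup β).toWord = [(x, true), (y, true), (x, false), (y, false)] := by
  rw [show (⁅of x, of y⁆ : FreeGroup β) = mk [(x, true), (y, true), (x, false), (y, false)] from rfl,
    toWord_mk]
  exact IsReduced.reduce_eq (by simp [isReduced_cons_cons, hxy, hxy.symm])

theorem lift_commutatorElement_injective {a b : α → β} (ha : Function.Injective a)
    (hb : Function.Injective b) (hab : ∀ i j, a i ≠ b j) :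
    Function.Injective (lift fun i => ⁅of (a i), of (b i)⁆) := by
  refine lift_injective_of_isReduced_append (fun i => ?_) fun ⟨i, s⟩ ⟨j, t⟩ hpq => ?_
  · simp [← toWord_eq_nil_iff, toWord_commutatorElement_of (hab i i)]
  · have hij : i = j → s = t := by simpa [IsReduced] using hpq
    cases s <;> cases t <;>
      simp [toWord_commutatorElement_of (hab _ _), toWord_commutatorElement_of (hab _ _).symm,
        isReduced_cons_cons, hab, ha.eq_iff, hb.eq_iff, (hab _ _).symm] at hij ⊢ <;>
      exact hij

end FreeGroup

namespace SatisfiesLaw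

theorem of_lift_injective {G H : Type*} [Group G] [Group H] (f : H →* G)
    {u : ℕ → FreeGroup ℕ} (hu : Function.Injective (FreeGroup.lift u))
    (hmem : ∀ (φ : FreeGroup ℕ →* G) (i : ℕ), φ (u i) ∈ f.range) (h : SatisfiesLaw H) :
    SatisfiesLaw G := by
  obtain ⟨w, hw1, hw⟩ := h
  refine ⟨FreeGroup.lift u w, fun h1 => hw1 (hu (h1.trans (map_one _).symm)), fun φ => ?_⟩
  choose ψ hψ using hmem φ
  have hcomp : φ.comp (FreeGroup.lift u) = f.comp (FreeGroup.lift ψ) :=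
    FreeGroup.ext_hom _ _ fun i => by simp [hψ]
  rw [← MonoidHom.comp_apply, hcomp, MonoidHom.comp_apply, hw, map_one]

variable {P : Type*} [Group P] {H K : Subgroup P}

theorem of_le (hHK : H ≤ K) (h : SatisfiesLaw K) : SatisfiesLaw H := by
  obtain ⟨w, hw1, hw⟩ := h
  refine ⟨w, hw1, fun φ => Subgroup.inclusion_injective hHK ?_⟩
  rw [← MonoidHom.comp_apply, hw, map_one]

theorem of_commutator (h : SatisfiesLaw (⁅H, H⁆ : Subgroup P)) : SatisfiesLaw H := by
  refine of_lift_injective (Subgroup.inclusion H.commutator_le_self)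
    (FreeGroup.lift_commutatorElement_injective (a := fun i => 2 * i) (b := fun i => 2 * i + 1)
      (fun _ _ => by simp) (fun _ _ => by simp) (fun _ _ => by omega)) (fun φ i => ?_) h
  rw [Subgroup.inclusion_range, Subgroup.mem_subgroupOf, map_commutatorElement]
  exact Subgroup.commutator_mem_commutator (φ _).2 (φ _).2

theorem of_finiteIndex (hHK : H ≤ K) [(H.subgroupOf K).FiniteIndex] (h : SatisfiesLaw H) :
    SatisfiesLaw K :=
  of_lift_injective (Subgroup.inclusion hHK)
    (FreeGroup.lift_of_pow_injective Subgroup.FiniteIndex.index_ne_zero) (fun φ _ => by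
      rw [Subgroup.inclusion_range, map_pow]
      exact (H.subgroupOf K).normalCore_le (Subgroup.pow_index_mem _ _)) h

end SatisfiesLaw

section NormalizedCommutator

variable {G : Type*} [Group G] {Γ N : Subgroup G}

theorem commutatorElement_mem_of_commute_conj (hN : ∀ g ∈ Γ, ∀ x ∈ N, g * x * g⁻¹ ∈ N)
    {a b g : G} (ha : a ∈ Γ) (hb : b ∈ Γ) (hg : g ∈ N) (hcomm : Commute a (g * b⁻¹ * g⁻¹)) :
    ⁅a, b⁆ ∈ N := by
  have hbg : ⁅b, g⁆ ∈ N := N.mul_mem (hN b hb g hg) (N.inv_mem hg)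
  have heq : ⁅a, b⁆ = ⁅a, ⁅b, g⁆⁆ := by
    rw [show ⁅b, g⁆ = b * (g * b⁻¹ * g⁻¹) by group, commutatorElement_mul_right_eq_mul_conj,
      hcomm.commutator_eq]
    group
  rw [heq]
  exact N.mul_mem (hN a ha _ hbg) (N.inv_mem hbg)

theorem commutatorElement_mem_of_mem_iSup (hN : ∀ g ∈ Γ, ∀ x ∈ N, g * x * g⁻¹ ∈ N)
    {ι : Sort*} {H : ι → Subgroup G} (hH : ∀ i, H i ≤ Γ) {x : G}
    (hx : ∀ i, ∀ y ∈ H i, ⁅x, y⁆ ∈ N) {y : G} (hy : y ∈ ⨆ i, H i) : ⁅x, y⁆ ∈ N := by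
  induction hy using Subgroup.iSup_induction' with
  | hp i y hy => exact hx i y hy
  | h1 => simp [N.one_mem]
  | hmul y₁ y₂ hy₁ _ h₁ h₂ =>
    rw [commutatorElement_mul_right_eq_mul_conj, mul_assoc _ y₁, mul_assoc]
    exact N.mul_mem h₁ (hN y₁ (iSup_le hH hy₁) _ h₂)

theorem commutator_iSup_le (hN : ∀ g ∈ Γ, ∀ x ∈ N, g * x * g⁻¹ ∈ N)
    {ι : Sort*} {H : ι → Subgroup G} (hH : ∀ i, H i ≤ Γ) (h : ∀ i j, ⁅H i, H j⁆ ≤ N) :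
    ⁅⨆ i, H i, ⨆ i, H i⁆ ≤ N := by
  refine Subgroup.commutator_le.mpr fun x hx y hy => ?_
  refine commutatorElement_mem_of_mem_iSup hN hH (fun j z hz => ?_) hy
  rw [← commutatorElement_inv]
  exact N.inv_mem (commutatorElement_mem_of_mem_iSup hN hH
    (fun i y hy => h j i (Subgroup.commutator_mem_commutator hz hy)) hx)

end NormalizedCommutator

section TreeAut

variable {X : Type*}

theorem IsTreeAut.exists_apply_append {f : Equiv.Perm (Vtx X)} (hf : IsTreeAut f) (v t : Vtx X) :
    ∃ s : Vtx X, s.length = t.length ∧ f (v ++ t) = f v ++ s := by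
  induction t using List.reverseRecOn with
  | nil => exact ⟨[], rfl, by simp⟩
  | append_singleton t x ih =>
    obtain ⟨s, hs, he⟩ := ih
    obtain ⟨y, hy⟩ := hf.2 (v ++ t) x
    refine ⟨s ++ [y], by simp [hs], ?_⟩
    rw [← List.append_assoc, hy, he, List.append_assoc]

theorem IsTreeAut.length_apply_s14 {f : Equiv.Perm (Vtx X)} (hf : IsTreeAut f) (t : Vtx X) :
    (f t).length = t.length := by
  obtain ⟨s, hs, he⟩ := hf.exists_apply_append [] t
  simpa [hf.1, hs] using congrArg List.length he

theorem IsTreeAut.apply_prefix {f : Equiv.Perm (Vtx X)} (hf : IsTreeAut f) {v t : Vtx X}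
    (h : v <+: t) : f v <+: f t := by
  obtain ⟨r, rfl⟩ := h
  obtain ⟨s, -, he⟩ := hf.exists_apply_append v r
  exact he ▸ List.prefix_append _ _

theorem mem_rist_iff {a : Equiv.Perm (Vtx X)} {v : Vtx X} :
    a ∈ rist v ↔ ∀ w : Vtx X, ¬ v <+: w → a w = w := Iff.rfl

theorem prefix_apply_of_mem_rist {a : Equiv.Perm (Vtx X)} {v t : Vtx X} (ha : a ∈ rist v)
    (h : v <+: t) : v <+: a t := by
  by_contra hc
  have hfix : t = a t := by simpa using mem_rist_iff.mp ((rist v).inv_mem ha) (a t) hc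
  exact hc (hfix ▸ h)

theorem not_prefix_of_prefix_of_length_eq {v w t : Vtx X} (hvw : v ≠ w)
    (hl : v.length = w.length) (hv : v <+: t) : ¬ w <+: t :=
  fun hw => hvw ((List.prefix_of_prefix_length_le hv hw hl.le).eq_of_length hl)

theorem commute_of_mem_rist {v w : Vtx X} (hvw : v ≠ w) (hl : v.length = w.length)
    {a b : Equiv.Perm (Vtx X)} (ha : a ∈ rist v) (hb : b ∈ rist w) : Commute a b := by
  refine Equiv.ext fun t => ?_
  simp only [Equiv.Perm.mul_apply]
  by_cases hv : v <+: t
  · have hw := not_prefix_of_prefix_of_length_eq hvw hl hv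
    have hw' := not_prefix_of_prefix_of_length_eq hvw hl (prefix_apply_of_mem_rist ha hv)
    rw [mem_rist_iff.mp hb t hw, mem_rist_iff.mp hb _ hw']
  · by_cases hw : w <+: t
    · have hv' := not_prefix_of_prefix_of_length_eq (Ne.symm hvw) hl.symm
        (prefix_apply_of_mem_rist hb hw)
      rw [mem_rist_iff.mp ha t hv, mem_rist_iff.mp ha _ hv']
    · rw [mem_rist_iff.mp hb t hw, mem_rist_iff.mp ha t hv, mem_rist_iff.mp hb t hw]

theorem conj_mem_rist {g b : Equiv.Perm (Vtx X)} (hg : IsTreeAut g) {v : Vtx X}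
    (hb : b ∈ rist v) : g * b * g⁻¹ ∈ rist (g v) := by
  refine mem_rist_iff.mpr fun w hw => ?_
  have hv : ¬ v <+: g⁻¹ w := fun h => hw (by simpa using hg.apply_prefix h)
  rw [Equiv.Perm.mul_apply, Equiv.Perm.mul_apply, mem_rist_iff.mp hb _ hv]
  simp

theorem ristLevel_le (Γ : Subgroup (Equiv.Perm (Vtx X))) (n : ℕ) : ristLevel Γ n ≤ Γ :=
  iSup₂_le fun _ _ => inf_le_right

end TreeAut

section BranchGroup

variable {X : Type*} {Γ N : Subgroup (Equiv.Perm (Vtx X))}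

theorem LevelTransitive.exists_level_forall_exists_mem_apply_ne (hLT : LevelTransitive Γ)
    (hNnorm : ∀ g ∈ Γ, ∀ x ∈ N, g * x * g⁻¹ ∈ N) (hN : N ≠ ⊥) :
    ∃ n, ∀ v : Vtx X, v.length = n → ∃ g ∈ N, g v ≠ v := by
  obtain ⟨⟨g, hgN⟩, hg1⟩ := Subgroup.ne_bot_iff_exists_ne_one.mp hN
  obtain ⟨u, hu⟩ : ∃ u, g u ≠ u := by
    by_contra! h
    exact hg1 (Subtype.ext (Equiv.ext h))
  refine ⟨u.length, fun v hv => ?_⟩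
  obtain ⟨h, hhΓ, rfl⟩ := hLT u v hv.symm
  exact ⟨h * g * h⁻¹, hNnorm h hhΓ g hgN, by simpa using hu⟩

theorem commutator_ristG_le (hAut : ∀ g ∈ Γ, IsTreeAut g) (hNG : N ≤ Γ)
    (hNnorm : ∀ g ∈ Γ, ∀ x ∈ N, g * x * g⁻¹ ∈ N) {n : ℕ}
    (hmove : ∀ v : Vtx X, v.length = n → ∃ g ∈ N, g v ≠ v) {v w : Vtx X} (hv : v.length = n)
    (hw : w.length = n) : ⁅ristG Γ v, ristG Γ w⁆ ≤ N := by
  refine Subgroup.commutator_le.mpr fun a ha b hb => ?_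
  obtain ⟨ha, haΓ⟩ := Subgroup.mem_inf.mp ha
  obtain ⟨hb, hbΓ⟩ := Subgroup.mem_inf.mp hb
  by_cases hvw : v = w
  · subst hvw
    obtain ⟨g, hgN, hgv⟩ := hmove v hv
    have hg := hAut g (hNG hgN)
    exact commutatorElement_mem_of_commute_conj hNnorm haΓ hbΓ hgN
      (commute_of_mem_rist (Ne.symm hgv) (hg.length_apply_s14 v).symm ha
        (conj_mem_rist hg ((rist v).inv_mem hb)))
  · rw [(commute_of_mem_rist hvw (hv.trans hw.symm) ha hb).commutator_eq]
    exact N.one_mem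

theorem exists_commutator_ristLevel_le (hAut : ∀ g ∈ Γ, IsTreeAut g) (hLT : LevelTransitive Γ)
    (hNG : N ≤ Γ) (hNnorm : ∀ g ∈ Γ, ∀ x ∈ N, g * x * g⁻¹ ∈ N) (hN : N ≠ ⊥) :
    ∃ n, ⁅ristLevel Γ n, ristLevel Γ n⁆ ≤ N := by
  obtain ⟨n, hmove⟩ := hLT.exists_level_forall_exists_mem_apply_ne hNnorm hN
  refine ⟨n, ?_⟩
  rw [ristLevel, ← iSup_subtype'']
  exact commutator_iSup_le hNnorm (fun _ => inf_le_right) fun v w =>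
    commutator_ristG_le hAut hNG hNnorm hmove v.2 w.2

end BranchGroup

theorem law_in_normal_subgroup_implies_law_general
    {X : Type*}
    (Γ : Subgroup (Equiv.Perm (Vtx X))) (hAut : ∀ g ∈ Γ, IsTreeAut g)
    (hLT : LevelTransitive Γ)
    (hbr : ∀ n : ℕ, ((ristLevel Γ n).subgroupOf Γ).FiniteIndex)
    (N : Subgroup (Equiv.Perm (Vtx X))) (hNG : N ≤ Γ)
    (hNnorm : ∀ g ∈ Γ, ∀ x ∈ N, g * x * g⁻¹ ∈ N) (hN : N ≠ ⊥)
    (hlaw : SatisfiesLaw N) :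
    SatisfiesLaw Γ := by
  obtain ⟨n, hn⟩ := exists_commutator_ristLevel_le hAut hLT hNG hNnorm hN
  have := hbr n
  exact ((hlaw.of_le hn).of_commutator).of_finiteIndex (ristLevel_le Γ n)

/-- if a non-trivial normal subgroup of a level-transitive branch
group satisfies a group law, then so does the whole group. -/
theorem law_in_normal_subgroup_implies_law
    {X : Type*} [DecidableEq X] [Fintype X]
    (Γ : Subgroup (Equiv.Perm (Vtx X))) (hAut : ∀ g ∈ Γ, IsTreeAut g)
    (hLT : LevelTransitive Γ)
    (hbr : ∀ n : ℕ, ((ristLevel Γ n).subgroupOf Γ).FiniteIndex)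
    (N : Subgroup (Equiv.Perm (Vtx X))) (hNG : N ≤ Γ)
    (hNnorm : ∀ g ∈ Γ, ∀ x ∈ N, g * x * g⁻¹ ∈ N) (hN : N ≠ ⊥)
    (hlaw : SatisfiesLaw N) :
    SatisfiesLaw Γ :=
  law_in_normal_subgroup_implies_law_general Γ hAut hLT hbr N hNG hNnorm hN hlaw
end

section
/- The Pervova group Γ = ⟨a, b, c⟩ acting on the ternary rooted tree, where a = σ_{123} (rooted cyclic permutation), b = (a, a⁻¹, b), c = (c, a, a⁻¹), is regular branch over its commutator subgroup: 1*Γ' ≤ Γ', i.e. Γ' contains v*Γ' for every vertex v. -/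
/-!
Since `v*g` is an iterate of the maps `g ↦ [x]*g` and conjugation by `a` carries `[x]*g` to
`[x+1]*g`, it suffices to show `0*Γ' ≤ Γ'`. Every `g ∈ Γ` is the state at `0` of an element of `Γ`
fixing the first level (`b`, `aba⁻¹`, `c` have states `a`, `b`, `c` at `0`), so conjugating
`0*x` by that element gives `0*(g x g⁻¹)`. Hence `{x | 0*x ∈ Γ'}` is normalized by `Γ`, and it
is enough that `0*[s, t] ∈ Γ'` for generators `s, t`; these are explicit commutators in `Γ`, e.g.
`0*[b, c] = [aba⁻¹, c]`, obtained by comparing states on the first level.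
-/

open List

/-- σ = (1 2 3) acting on the first letter; the rooted automorphism `a`. -/
def aF : List (Fin 3) → List (Fin 3)
  | [] => []
  | x :: t => finRotate 3 x :: t

def aF' : List (Fin 3) → List (Fin 3)
  | [] => []
  | x :: t => (finRotate 3).symm x :: t

lemma aF'_aF : ∀ t, aF' (aF t) = t := by
  intro t
  cases t with
  | nil => rfl
  | cons x t => simp only [aF, aF', Equiv.symm_apply_apply]

lemma aF_aF' : ∀ t, aF (aF' t) = t := by
  intro t
  cases t with
  | nil => rfl
  | cons x t => simp only [aF, aF', Equiv.apply_symm_apply]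

/-- The recursively defined automorphism `b = (a, a⁻¹, b)`. -/
def bF : List (Fin 3) → List (Fin 3)
  | [] => []
  | x :: t => x :: (if x = 0 then aF t else if x = 1 then aF' t else bF t)

def bF' : List (Fin 3) → List (Fin 3)
  | [] => []
  | x :: t => x :: (if x = 0 then aF' t else if x = 1 then aF t else bF' t)

lemma bF'_bF : ∀ t, bF' (bF t) = t := by
  intro t
  induction t with
  | nil => rfl
  | cons x t ih =>
      simp only [bF, bF']
      split_ifs <;> simp [aF'_aF, aF_aF', ih]

lemma bF_bF' : ∀ t, bF (bF' t) = t := by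
  intro t
  induction t with
  | nil => rfl
  | cons x t ih =>
      simp only [bF, bF']
      split_ifs <;> simp [aF'_aF, aF_aF', ih]

/-- The recursively defined automorphism `c = (c, a, a⁻¹)`. -/
def cF : List (Fin 3) → List (Fin 3)
  | [] => []
  | x :: t => x :: (if x = 0 then cF t else if x = 1 then aF t else aF' t)

def cF' : List (Fin 3) → List (Fin 3)
  | [] => []
  | x :: t => x :: (if x = 0 then cF' t else if x = 1 then aF' t else aF t)

lemma cF'_cF : ∀ t, cF' (cF t) = t := by
  intro t
  induction t with
  | nil => rfl
  | cons x t ih =>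
      simp only [cF, cF']
      split_ifs <;> simp [aF'_aF, aF_aF', ih]

lemma cF_cF' : ∀ t, cF (cF' t) = t := by
  intro t
  induction t with
  | nil => rfl
  | cons x t ih =>
      simp only [cF, cF']
      split_ifs <;> simp [aF'_aF, aF_aF', ih]

/-- The generator `a = σ_{123}` of Pervova's group. -/
def aP : Equiv.Perm (Vtx (Fin 3)) := ⟨aF, aF', aF'_aF, aF_aF'⟩

/-- The generator `b = (a, a⁻¹, b)` of Pervova's group. -/
def bP : Equiv.Perm (Vtx (Fin 3)) := ⟨bF, bF', bF'_bF, bF_bF'⟩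

/-- The generator `c = (c, a, a⁻¹)` of Pervova's group. -/
def cP : Equiv.Perm (Vtx (Fin 3)) := ⟨cF, cF', cF'_cF, cF_cF'⟩

/-- Pervova's group `Γ = ⟨a, b, c⟩`. -/
def PervovaGroup : Subgroup (Equiv.Perm (Vtx (Fin 3))) :=
  Subgroup.closure {aP, bP, cP}

open scoped commutatorElement

theorem Subgroup.commutator_closure_le {G : Type*} [Group G] {S : Set G} {K : Subgroup G}
    (hK : closure S ≤ normalizer (K : Set G)) (hS : ∀ s ∈ S, ∀ t ∈ S, ⁅s, t⁆ ∈ K) :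
    ⁅closure S, closure S⁆ ≤ K := by
  have conj {g k : G} (hg : g ∈ closure S) (hk : k ∈ K) : g * k * g⁻¹ ∈ K :=
    (mem_normalizer_iff.mp (hK hg) k).mp hk
  have conj_inv {g k : G} (hg : g ∈ closure S) (hk : k ∈ K) : g⁻¹ * k * g ∈ K := by
    simpa using conj (inv_mem hg) hk
  rw [commutator_le]
  intro x hx y hy
  induction hx, hy using closure_induction₂ with
  | mem s t hs ht => exact hS s hs t ht
  | one_left => simp
  | one_right => simp
  | mul_left x y z hx _ _ hxz hyz =>
    rw [commutatorElement_mul_left_eq_conj_mul]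
    exact mul_mem (conj hx hyz) hxz
  | mul_right y z x hy _ _ hxy hxz =>
    rw [commutatorElement_mul_right_eq_mul_conj, mul_assoc, mul_assoc, ← mul_assoc y]
    exact mul_mem hxy (conj hy hxz)
  | inv_left x y hx _ hxy =>
    rw [commutatorElement_inv_left, ← commutatorElement_inv]
    exact conj_inv hx (inv_mem hxy)
  | inv_right x y _ hy hxy =>
    rw [commutatorElement_inv_right, ← commutatorElement_inv]
    exact conj_inv hy (inv_mem hxy)

@[simp]
theorem Pi.commutatorElement_apply {ι : Type*} {G : ι → Type*} [∀ i, Group (G i)]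
    (f g : ∀ i, G i) (i : ι) : ⁅f, g⁆ i = ⁅f i, g i⁆ := rfl

section Tree

variable {X : Type*}

def ofStatesFun (f : X → Vtx X → Vtx X) : Vtx X → Vtx X
  | [] => []
  | x :: t => x :: f x t

/-- `ofStates f` fixes the first letter and acts as `f x` below `x`; for `X = Fin 3` it is the
paper's `(f 0, f 1, f 2)`, the paper's letters `1, 2, 3` being `0, 1, 2` here. -/
def ofStates : (X → Equiv.Perm (Vtx X)) →* Equiv.Perm (Vtx X) where
  toFun f :=
    { toFun := ofStatesFun fun x => f x
      invFun := ofStatesFun fun x => (f x).symm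
      left_inv := by rintro (_ | ⟨x, t⟩) <;> simp [ofStatesFun]
      right_inv := by rintro (_ | ⟨x, t⟩) <;> simp [ofStatesFun] }
  map_one' := by ext (_ | ⟨x, t⟩) <;> rfl
  map_mul' _ _ := by ext (_ | ⟨x, t⟩) <;> rfl

@[simp]
theorem ofStates_apply_nil (f : X → Equiv.Perm (Vtx X)) : ofStates f [] = [] := rfl

@[simp]
theorem ofStates_apply_cons (f : X → Equiv.Perm (Vtx X)) (x : X) (t : Vtx X) :
    ofStates f (x :: t) = x :: f x t := rfl

variable [DecidableEq X]

theorem vtr_nil (g : Equiv.Perm (Vtx X)) : vtr [] g = g := by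
  ext w; simp [vtr_apply]

theorem vtr_singleton (x : X) (g : Equiv.Perm (Vtx X)) :
    vtr [x] g = ofStates (Pi.mulSingle x g) := by
  ext (_ | ⟨y, t⟩)
  · simp [vtr_apply]
  · by_cases h : x = y
    · subst h; simp [vtr_apply]
    · simp [vtr_apply, h, Ne.symm h]

theorem vtr_cons (x : X) (v : Vtx X) (g : Equiv.Perm (Vtx X)) :
    vtr (x :: v) g = vtr [x] (vtr v g) := by
  rw [vtr_singleton]
  ext (_ | ⟨y, t⟩)
  · simp [vtr_apply]
  · by_cases h : x = y
    · subst h; by_cases hv : v <+: t <;> simp [vtr_apply, hv]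
    · simp [vtr_apply, h, Ne.symm h]

theorem vtr_mem_of_forall_vtr_singleton_mem {K : Subgroup (Equiv.Perm (Vtx X))}
    (hK : ∀ x : X, ∀ g ∈ K, vtr [x] g ∈ K) (v : Vtx X) {g : Equiv.Perm (Vtx X)} (hg : g ∈ K) :
    vtr v g ∈ K := by
  induction v with
  | nil => rwa [vtr_nil]
  | cons x v ih => rw [vtr_cons]; exact hK x _ ih

theorem ofStates_mul_vtr_singleton_mul_inv (f : X → Equiv.Perm (Vtx X)) (x : X)
    (h : Equiv.Perm (Vtx X)) :
    ofStates f * vtr [x] h * (ofStates f)⁻¹ = vtr [x] (f x * h * (f x)⁻¹) := by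
  rw [vtr_singleton, vtr_singleton, ← map_inv, ← map_mul, ← map_mul]
  congr 1
  funext y
  by_cases hy : y = x
  · subst hy; simp
  · simp [hy]

end Tree


local notation "Γ" => PervovaGroup
local notation "Γ'" => ⁅PervovaGroup, PervovaGroup⁆

theorem aP_mem : aP ∈ Γ := Subgroup.subset_closure (by simp)
theorem bP_mem : bP ∈ Γ := Subgroup.subset_closure (by simp)
theorem cP_mem : cP ∈ Γ := Subgroup.subset_closure (by simp)

theorem aP_mul_aP : aP * aP = aP⁻¹ := by
  ext (_ | ⟨x, t⟩)
  · rfl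
  · fin_cases x <;> rfl

theorem bP_eq_ofStates : bP = ofStates ![aP, aP⁻¹, bP] := by
  ext (_ | ⟨x, t⟩)
  · rfl
  · fin_cases x <;> rfl

theorem cP_eq_ofStates : cP = ofStates ![cP, aP, aP⁻¹] := by
  ext (_ | ⟨x, t⟩)
  · rfl
  · fin_cases x <;> rfl

theorem aP_mul_ofStates_mul_inv (f : Fin 3 → Equiv.Perm (Vtx (Fin 3))) :
    aP * ofStates f * aP⁻¹ = ofStates ![f 2, f 0, f 1] := by
  ext (_ | ⟨x, t⟩)
  · rfl
  · fin_cases x <;> rfl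

theorem aP_inv_mul_ofStates_mul (f : Fin 3 → Equiv.Perm (Vtx (Fin 3))) :
    aP⁻¹ * ofStates f * aP = ofStates ![f 1, f 2, f 0] := by
  ext (_ | ⟨x, t⟩)
  · rfl
  · fin_cases x <;> rfl

theorem aP_mul_bP_mul_inv : aP * bP * aP⁻¹ = ofStates ![bP, aP, aP⁻¹] := by
  conv_lhs => rw [bP_eq_ofStates]
  simp [aP_mul_ofStates_mul_inv]

theorem aP_inv_mul_bP_mul : aP⁻¹ * bP * aP = ofStates ![aP⁻¹, bP, aP] := by
  conv_lhs => rw [bP_eq_ofStates]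
  simp [aP_inv_mul_ofStates_mul]

theorem aP_mul_vtr_singleton_mul_inv (x : Fin 3) (g : Equiv.Perm (Vtx (Fin 3))) :
    aP * vtr [x] g * aP⁻¹ = vtr [finRotate 3 x] g := by
  rw [vtr_singleton, vtr_singleton, aP_mul_ofStates_mul_inv]
  congr 1
  funext i
  fin_cases x <;> fin_cases i <;> rfl

theorem vtr_zero_commutator_aP_bP :
    vtr [0] ⁅aP, bP⁆ = ⁅bP * (aP * bP * aP⁻¹), bP * (aP⁻¹ * bP * aP)⁻¹⁆ := by
  have h : Pi.mulSingle 0 ⁅aP, bP⁆ =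
      ⁅![aP, aP⁻¹, bP] * ![bP, aP, aP⁻¹], ![aP, aP⁻¹, bP] * ![aP⁻¹, bP, aP]⁻¹⁆ := by
    funext i
    fin_cases i <;> simp [aP_mul_aP]
    simp [commutatorElement_def, mul_assoc]
  rw [vtr_singleton, h, map_commutatorElement, map_mul, map_mul, map_inv, ← bP_eq_ofStates,
    ← aP_mul_bP_mul_inv, ← aP_inv_mul_bP_mul]

theorem vtr_zero_commutator_aP_cP :
    vtr [0] ⁅aP, cP⁆ = ⁅bP * cP, bP * (aP⁻¹ * bP * aP)⁻¹⁆ := by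
  have h : Pi.mulSingle 0 ⁅aP, cP⁆ =
      ⁅![aP, aP⁻¹, bP] * ![cP, aP, aP⁻¹], ![aP, aP⁻¹, bP] * ![aP⁻¹, bP, aP]⁻¹⁆ := by
    funext i
    fin_cases i <;> simp [aP_mul_aP]
    simp [commutatorElement_def, mul_assoc]
  rw [vtr_singleton, h, map_commutatorElement, map_mul, map_mul, map_inv, ← bP_eq_ofStates,
    ← cP_eq_ofStates, ← aP_inv_mul_bP_mul]

theorem vtr_zero_commutator_bP_cP : vtr [0] ⁅bP, cP⁆ = ⁅aP * bP * aP⁻¹, cP⁆ := by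
  have h : Pi.mulSingle 0 ⁅bP, cP⁆ = ⁅![bP, aP, aP⁻¹], ![cP, aP, aP⁻¹]⁆ := by
    funext i
    fin_cases i <;> simp
  rw [vtr_singleton, h, map_commutatorElement, ← aP_mul_bP_mul_inv, ← cP_eq_ofStates]

theorem commutator_mem_comap_vtr_zero {s t : Equiv.Perm (Vtx (Fin 3))}
    (hs : s ∈ ({aP, bP, cP} : Set _)) (ht : t ∈ ({aP, bP, cP} : Set _)) :
    ⁅s, t⁆ ∈ Subgroup.comap (vtrHom [0]) Γ' := by
  have hb₁ : aP * bP * aP⁻¹ ∈ Γ := mul_mem (mul_mem aP_mem bP_mem) (inv_mem aP_mem)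
  have hb₂ : aP⁻¹ * bP * aP ∈ Γ := mul_mem (mul_mem (inv_mem aP_mem) bP_mem) aP_mem
  have hab : vtr [0] ⁅aP, bP⁆ ∈ Γ' := by
    rw [vtr_zero_commutator_aP_bP]
    exact Subgroup.commutator_mem_commutator (mul_mem bP_mem hb₁)
      (mul_mem bP_mem (inv_mem hb₂))
  have hac : vtr [0] ⁅aP, cP⁆ ∈ Γ' := by
    rw [vtr_zero_commutator_aP_cP]
    exact Subgroup.commutator_mem_commutator (mul_mem bP_mem cP_mem)
      (mul_mem bP_mem (inv_mem hb₂))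
  have hbc : vtr [0] ⁅bP, cP⁆ ∈ Γ' := by
    rw [vtr_zero_commutator_bP_cP]
    exact Subgroup.commutator_mem_commutator hb₁ cP_mem
  have swap {u w} (h : ⁅u, w⁆ ∈ Subgroup.comap (vtrHom [0]) Γ') :
      ⁅w, u⁆ ∈ Subgroup.comap (vtrHom [0]) Γ' := by
    rw [← commutatorElement_inv]; exact inv_mem h
  rcases hs with rfl | rfl | rfl <;> rcases ht with rfl | rfl | rfl <;>
    first
    | simp only [commutatorElement_self, one_mem]
    | assumption
    | exact swap ‹_›

theorem exists_ofStates_mem_apply_zero_eq {g : Equiv.Perm (Vtx (Fin 3))} (hg : g ∈ Γ) :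
    ∃ f, ofStates f ∈ Γ ∧ f 0 = g := by
  suffices Γ ≤ (Subgroup.comap ofStates Γ).map (Pi.evalMonoidHom _ 0) by simpa using this hg
  refine Subgroup.closure_le _ |>.2 ?_
  rintro _ (rfl | rfl | rfl)
  · exact ⟨![aP, aP⁻¹, bP], by simpa [← bP_eq_ofStates] using bP_mem, rfl⟩
  · refine ⟨![bP, aP, aP⁻¹], ?_, rfl⟩
    simpa [← aP_mul_bP_mul_inv] using mul_mem (mul_mem aP_mem bP_mem) (inv_mem aP_mem)
  · exact ⟨![cP, aP, aP⁻¹], by simpa [← cP_eq_ofStates] using cP_mem, rfl⟩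

theorem pervovaGroup_le_normalizer_comap_vtr_zero :
    Γ ≤ Subgroup.normalizer
      (Subgroup.comap (vtrHom [0]) Γ' : Set (Equiv.Perm (Vtx (Fin 3)))) := by
  intro g hg
  obtain ⟨f, hf, rfl⟩ := exists_ofStates_mem_apply_zero_eq hg
  refine Subgroup.mem_normalizer_iff.2 fun h => ?_
  change vtr [0] h ∈ Γ' ↔ vtr [0] (f 0 * h * (f 0)⁻¹) ∈ Γ'
  rw [← ofStates_mul_vtr_singleton_mul_inv]
  exact Subgroup.mem_normalizer_iff.1 (Subgroup.normalizer_commutator_ge_left Γ Γ hf) _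

theorem commutator_le_comap_vtr_zero : Γ' ≤ Subgroup.comap (vtrHom [0]) Γ' :=
  Subgroup.commutator_closure_le pervovaGroup_le_normalizer_comap_vtr_zero
    fun _ hs _ ht => commutator_mem_comap_vtr_zero hs ht

theorem vtr_singleton_mem_commutator (x : Fin 3) {g : Equiv.Perm (Vtx (Fin 3))} (hg : g ∈ Γ') :
    vtr [x] g ∈ Γ' := by
  have h0 : vtr [0] g ∈ Γ' := commutator_le_comap_vtr_zero hg
  have rotate {y : Fin 3} (hy : vtr [y] g ∈ Γ') : vtr [finRotate 3 y] g ∈ Γ' := by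
    rw [← aP_mul_vtr_singleton_mul_inv]
    exact (Subgroup.mem_normalizer_iff.1
      (Subgroup.normalizer_commutator_ge_left Γ Γ aP_mem) _).1 hy
  fin_cases x
  · exact h0
  · exact rotate h0
  · exact rotate (rotate h0)

/-- Pervova's group is regular branch over its commutator
subgroup: `Γ'` contains `v*Γ'` for every vertex `v`. -/
theorem pervova_regular_branch_over_commutator :
    ∀ v : Vtx (Fin 3), ∀ g ∈ ⁅PervovaGroup, PervovaGroup⁆,
      vtr v g ∈ ⁅PervovaGroup, PervovaGroup⁆ :=
  fun v _ hg =>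
    vtr_mem_of_forall_vtr_singleton_mem (fun x _ => vtr_singleton_mem_commutator x) v hg
end
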